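/- arXiv:1602.01187 — 2 statements merged into one kernel-verified Lean document; each statement's English description precedes it below -/
import Mathlib

section
/- Let p ≥ 1, let X be a p×p SPD matrix, and let (U,D) ∈ E_X. Then E_X = { (U·R·P⁻¹, P·D·P⁻¹) : R ∈ G_D⁰, P an even p×p signed permutation matrix }. -/
/-!
Write `D = diag d`. If `(V, L)` is a second decomposition of `X`, then `Q = Uᵀ V` conjugates
`L` to `D`, so `L = diag (d ∘ σ)` for a permutation `σ` (same characteristic polynomial), and
`Q P_σ` is an orthogonal matrix commuting with `D`. Every such matrix is `W S` with `W ∈ G_D⁰`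
and `S` a diagonal sign matrix: column by column, a product of two Householder reflections in
vectors of a single eigenspace of `D` moves the column onto a coordinate axis, and such a product
is joined to `1` inside `G_D` by moving one mirror. Then `R = W`, `P = P_σ S`, and `det P = 1`
because `det U = det V = det W = 1`. The converse inclusion is a direct computation.
-/
open Matrix

/-- `U` is a special orthogonal (rotation) matrix. -/
def IsSO {p : ℕ} (U : Matrix (Fin p) (Fin p) ℝ) : Prop :=
  Uᵀ * U = 1 ∧ U.det = 1

/-- `D` is diagonal with strictly positive diagonal entries. -/
def IsPosDiag {p : ℕ} (D : Matrix (Fin p) (Fin p) ℝ) : Prop :=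
  D.IsDiag ∧ ∀ i, 0 < D i i

/-- The fiber `E_X` of eigendecompositions of `X`. -/
def fiber {p : ℕ} (X : Matrix (Fin p) (Fin p) ℝ) :
    Set (Matrix (Fin p) (Fin p) ℝ × Matrix (Fin p) (Fin p) ℝ) :=
  { UD | IsSO UD.1 ∧ IsPosDiag UD.2 ∧ UD.1 * UD.2 * UD.1ᵀ = X }

/-- A signed permutation matrix: exactly one nonzero entry in each row and column,
each nonzero entry being `1` or `-1`. -/
def IsSignedPerm {p : ℕ} (M : Matrix (Fin p) (Fin p) ℝ) : Prop :=
  (∀ i, ∃! j, M i j ≠ 0) ∧ (∀ j, ∃! i, M i j ≠ 0) ∧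
    ∀ i j, M i j = 0 ∨ M i j = 1 ∨ M i j = -1

/-- An even signed permutation matrix. -/
def IsEvenSignedPerm {p : ℕ} (M : Matrix (Fin p) (Fin p) ℝ) : Prop :=
  IsSignedPerm M ∧ M.det = 1

/-- Frobenius norm of a matrix. -/
noncomputable def frob {p : ℕ} (A : Matrix (Fin p) (Fin p) ℝ) : ℝ :=
  Real.sqrt (∑ i, ∑ j, (A i j) ^ 2)

/-- `logdist Q` is the infimum of Frobenius norms of skew-symmetric logarithms of `Q`. -/
noncomputable def logdist {p : ℕ} (Q : Matrix (Fin p) (Fin p) ℝ) : ℝ :=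
  sInf { r | ∃ A : Matrix (Fin p) (Fin p) ℝ,
      Aᵀ = -A ∧ NormedSpace.exp A = Q ∧ r = frob A }

/-- Log of a positive diagonal matrix (entrywise log of the diagonal). -/
noncomputable def logDiag {p : ℕ} (D : Matrix (Fin p) (Fin p) ℝ) :
    Matrix (Fin p) (Fin p) ℝ :=
  Matrix.diagonal fun i => Real.log (D i i)

/-- The product distance on `SO(p) × Diag⁺(p)` with weight `k`. -/
noncomputable def dM {p : ℕ} (k : ℝ)
    (UD VL : Matrix (Fin p) (Fin p) ℝ × Matrix (Fin p) (Fin p) ℝ) : ℝ :=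
  Real.sqrt ((k / 2) * logdist (UD.1⁻¹ * VL.1) ^ 2 +
    frob (logDiag UD.2 - logDiag VL.2) ^ 2)

/-- The scaling–rotation distance between `X` and `Y`. -/
noncomputable def dSR {p : ℕ} (k : ℝ) (X Y : Matrix (Fin p) (Fin p) ℝ) : ℝ :=
  sInf { r | ∃ UD ∈ fiber X, ∃ VL ∈ fiber Y, r = dM k UD VL }

/-- The stabilizer `G_D` of `D` in `SO(p)`. -/
def GD {p : ℕ} (D : Matrix (Fin p) (Fin p) ℝ) : Set (Matrix (Fin p) (Fin p) ℝ) :=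
  { R | IsSO R ∧ R * D = D * R }

lemma one_mem_GD {p : ℕ} (D : Matrix (Fin p) (Fin p) ℝ) :
    (1 : Matrix (Fin p) (Fin p) ℝ) ∈ GD D :=
  ⟨⟨by simp, by simp⟩, by simp⟩

/-- The identity component `G_D⁰` of `G_D` (subspace topology). -/
noncomputable def GD0 {p : ℕ} (D : Matrix (Fin p) (Fin p) ℝ) :
    Set (Matrix (Fin p) (Fin p) ℝ) :=
  { R | ∃ h : R ∈ GD D,
      (⟨R, h⟩ : GD D) ∈ connectedComponent (⟨1, one_mem_GD D⟩ : GD D) }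

/-- The coordinate plane `ℝ^J ⊆ ℝ^p`. -/
def coordPlane {p : ℕ} (J : Finset (Fin p)) : Submodule ℝ (Fin p → ℝ) where
  carrier := { x | ∀ i ∉ J, x i = 0 }
  add_mem' := by intro a b ha hb i hi; simp [ha i hi, hb i hi]
  zero_mem' := by intro i _; rfl
  smul_mem' := by intro c a ha i hi; simp [ha i hi]

open Equiv

section LinearAlgebra

variable {n R : Type*} [Fintype n]

lemma mul_diagonal_eq_diagonal_mul_iff [DecidableEq n] [CommRing R] [NoZeroDivisors R]
    {A : Matrix n n R} {d : n → R} :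
    A * diagonal d = diagonal d * A ↔ ∀ i j, A i j ≠ 0 → d i = d j := by
  simp only [← Matrix.ext_iff, mul_diagonal, diagonal_mul]
  refine forall₂_congr fun i j => ⟨fun h hA => ?_, fun h => ?_⟩
  · exact (mul_left_cancel₀ hA (h.trans (mul_comm _ _))).symm
  · by_cases hA : A i j = 0
    · simp [hA]
    · rw [h hA, mul_comm]

lemma transpose_mul_self_mul_eq_one [DecidableEq n] [CommRing R] {A B : Matrix n n R}
    (hA : Aᵀ * A = 1) (hB : Bᵀ * B = 1) : (A * B)ᵀ * (A * B) = 1 := by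
  rw [transpose_mul, Matrix.mul_assoc, ← Matrix.mul_assoc Aᵀ, hA, Matrix.one_mul, hB]

lemma mul_eq_mul_of_mul_mul_transpose_eq [DecidableEq n] [CommRing R] {Q A : Matrix n n R}
    (hQ : Qᵀ * Q = 1) (h : Q * A * Qᵀ = A) : Q * A = A * Q := by
  calc Q * A = Q * A * (Qᵀ * Q) := by rw [hQ, Matrix.mul_one]
    _ = A * Q := by rw [← Matrix.mul_assoc, h]

lemma exists_diagonal_of_isDiag_of_transpose_mul_self [DecidableEq n] [CommRing R]
    [NoZeroDivisors R] {A : Matrix n n R} (hA : Aᵀ * A = 1) (hdiag : A.IsDiag) :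
    ∃ s : n → R, (∀ i, s i = 1 ∨ s i = -1) ∧ A = diagonal s := by
  refine ⟨A.diag, fun i => mul_self_eq_one_iff.mp ?_, hdiag.diagonal_diag.symm⟩
  rw [← hdiag.diagonal_diag, diagonal_transpose, diagonal_mul_diagonal] at hA
  simpa using congrFun₂ hA i i

lemma exists_perm_comp_eq_of_map_univ_eq {α : Type*} [DecidableEq α] {f g : n → α}
    (h : Finset.univ.val.map f = Finset.univ.val.map g) : ∃ σ : Perm n, f ∘ σ = g := by
  have hcard c : Fintype.card {a // g a = c} = Fintype.card {b // f b = c} := by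
    have := congrArg (Multiset.count c) h
    simp only [Multiset.count_map, Fintype.card_subtype, eq_comm (a := c)] at this ⊢
    exact this.symm
  exact ⟨ofFiberEquiv fun c => Fintype.equivOfCardEq (hcard c), funext (ofFiberEquiv_map _)⟩

theorem exists_perm_comp_eq_of_mul_diagonal_mul_eq [DecidableEq n] [CommRing R] [IsDomain R]
    {Q Q' : Matrix n n R} {d l : n → R} (hQ : Q' * Q = 1) (h : Q * diagonal l * Q' = diagonal d) :
    ∃ σ : Perm n, d ∘ σ = l := by
  classical
  have hchar : (diagonal d).charpoly = (diagonal l).charpoly := by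
    rw [← h, Matrix.mul_assoc, charpoly_mul_comm, Matrix.mul_assoc, hQ, Matrix.mul_one]
  have hroots (f : n → R) : (diagonal f).charpoly.roots = Finset.univ.val.map f := by
    rw [charpoly_diagonal, Finset.prod_eq_multiset_prod, ← Polynomial.roots_multiset_prod_X_sub_C
      (Finset.univ.val.map f), Multiset.map_map]
    rfl
  exact exists_perm_comp_eq_of_map_univ_eq (by rw [← hroots, ← hroots, hchar])

end LinearAlgebra

section SignedPerm

variable {n R : Type*} [Fintype n] [DecidableEq n] [CommRing R]

def signedPermMatrix (σ : Perm n) (s : n → R) : Matrix n n R :=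
  σ.permMatrix R * diagonal s

variable (σ : Perm n) {s : n → R}

lemma signedPermMatrix_apply (s : n → R) (i j : n) :
    signedPermMatrix σ s i j = if σ i = j then s j else 0 := by
  simp [signedPermMatrix, Equiv.toPEquiv_apply]

lemma permMatrix_transpose_mul_self : (σ.permMatrix R)ᵀ * σ.permMatrix R = 1 := by
  rw [transpose_permMatrix, ← permMatrix_mul, mul_inv_cancel, permMatrix_one]

lemma permMatrix_mul_diagonal_mul_transpose (d : n → R) :
    σ.permMatrix R * diagonal d * (σ.permMatrix R)ᵀ = diagonal (d ∘ σ) := by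
  rw [PEquiv.toMatrix_toPEquiv_mul, ← PEquiv.toMatrix_symm, ← Equiv.toPEquiv_symm,
    PEquiv.mul_toMatrix_toPEquiv, submatrix_submatrix]
  exact submatrix_diagonal_equiv d σ

lemma signedPermMatrix_transpose_mul_self (hs : ∀ i, s i * s i = 1) :
    (signedPermMatrix σ s)ᵀ * signedPermMatrix σ s = 1 := by
  rw [signedPermMatrix, transpose_mul, diagonal_transpose, Matrix.mul_assoc,
    ← Matrix.mul_assoc _ (σ.permMatrix R), permMatrix_transpose_mul_self, Matrix.one_mul,
    diagonal_mul_diagonal]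
  simp only [hs]
  exact diagonal_one

lemma signedPermMatrix_mul_diagonal_mul_transpose (hs : ∀ i, s i * s i = 1) (d : n → R) :
    signedPermMatrix σ s * diagonal d * (signedPermMatrix σ s)ᵀ = diagonal (d ∘ σ) := by
  have hsds : diagonal s * diagonal d * diagonal s = diagonal d := by
    rw [diagonal_mul_diagonal, diagonal_mul_diagonal]
    congr 1
    ext i
    linear_combination d i * hs i
  calc _ = σ.permMatrix R * (diagonal s * diagonal d * diagonal s) * (σ.permMatrix R)ᵀ := by
        simp only [signedPermMatrix, transpose_mul, diagonal_transpose, Matrix.mul_assoc]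
    _ = _ := by rw [hsds, permMatrix_mul_diagonal_mul_transpose]

end SignedPerm

section Householder

variable {n : Type*} [Fintype n] [DecidableEq n]

noncomputable def householder (w : n → ℝ) : Matrix n n ℝ :=
  1 - (2 / (w ⬝ᵥ w)) • vecMulVec w w

variable {w : n → ℝ}

lemma householder_mulVec (w x : n → ℝ) :
    householder w *ᵥ x = x - (2 * (w ⬝ᵥ x) / (w ⬝ᵥ w)) • w := by
  rw [householder, sub_mulVec, one_mulVec, smul_mulVec, vecMulVec_mulVec, op_smul_eq_smul,
    smul_smul, mul_div_right_comm]

lemma householder_mulVec_of_dotProduct_eq_zero {x : n → ℝ} (h : w ⬝ᵥ x = 0) :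
    householder w *ᵥ x = x := by
  simp [householder_mulVec, h]

lemma householder_mulVec_self (hw : w ≠ 0) : householder w *ᵥ w = -w := by
  have : w ⬝ᵥ w ≠ 0 := dotProduct_self_eq_zero.not.mpr hw
  rw [householder_mulVec, mul_div_assoc, div_self this, mul_one, two_smul, sub_add_cancel_left]

lemma householder_sub_mulVec {a b : n → ℝ} (h : a ⬝ᵥ a = b ⬝ᵥ b) (hab : a ≠ b) :
    householder (a - b) *ᵥ a = b := by
  have hne : (a - b) ⬝ᵥ (a - b) ≠ 0 := dotProduct_self_eq_zero.not.mpr (sub_ne_zero.mpr hab)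
  have hcoef : 2 * ((a - b) ⬝ᵥ a) / ((a - b) ⬝ᵥ (a - b)) = 1 := by
    rw [div_eq_one_iff_eq hne]
    simp only [sub_dotProduct, dotProduct_sub, dotProduct_comm b a] at hne ⊢
    linarith
  rw [householder_mulVec, hcoef, one_smul, sub_sub_cancel]

lemma householder_mul_self (hw : w ≠ 0) : householder w * householder w = 1 := by
  refine mulVec_injective (funext fun x => ?_)
  rw [← mulVec_mulVec, householder_mulVec w x, mulVec_sub, mulVec_smul, householder_mulVec_self hw,
    householder_mulVec, one_mulVec, smul_neg, sub_neg_eq_add, sub_add_cancel]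

lemma householder_transpose (w : n → ℝ) : (householder w)ᵀ = householder w := by
  simp [householder]

lemma det_householder (hw : w ≠ 0) : (householder w).det = -1 := by
  have : w ⬝ᵥ w ≠ 0 := dotProduct_self_eq_zero.not.mpr hw
  rw [householder, sub_eq_add_neg, ← neg_smul, vecMulVec_eq Unit, ← Matrix.smul_mul,
    ← replicateCol_smul, det_one_add_replicateCol_mul_replicateRow, dotProduct_smul, smul_eq_mul,
    neg_mul, div_mul_cancel₀ _ this]
  norm_num

lemma householder_mul_diagonal_comm {d : n → ℝ} {c : ℝ} (hw : ∀ i, w i ≠ 0 → d i = c) :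
    householder w * diagonal d = diagonal d * householder w := by
  refine mul_diagonal_eq_diagonal_mul_iff.mpr fun i j hij => ?_
  by_cases h : i = j
  · rw [h]
  · simp only [householder, Matrix.sub_apply, one_apply_ne h, Matrix.smul_apply, vecMulVec_apply,
      smul_eq_mul, zero_sub, neg_ne_zero] at hij
    rw [hw i (left_ne_zero_of_mul (right_ne_zero_of_mul hij)),
      hw j (right_ne_zero_of_mul (right_ne_zero_of_mul hij))]

lemma continuous_householder {X : Type*} [TopologicalSpace X] {f : X → n → ℝ} (hf : Continuous f)
    (hf0 : ∀ x, f x ≠ 0) : Continuous fun x => householder (f x) :=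
  continuous_const.sub <| (continuous_const.div (hf.dotProduct hf)
    fun x => dotProduct_self_eq_zero.not.mpr (hf0 x)).smul (hf.matrix_vecMulVec hf)

end Householder

section IsSignedPerm

variable {p : ℕ}

lemma isSignedPerm_signedPermMatrix (σ : Perm (Fin p)) {s : Fin p → ℝ}
    (hs : ∀ i, s i = 1 ∨ s i = -1) : IsSignedPerm (signedPermMatrix σ s) := by
  have hs0 : ∀ i, s i ≠ 0 := fun i => by rcases hs i with h | h <;> simp [h]
  refine ⟨fun i => ⟨σ i, ?_, fun j hj => ?_⟩, fun j => ⟨σ.symm j, ?_, fun i hi => ?_⟩,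
    fun i j => ?_⟩ <;> simp only [signedPermMatrix_apply] at *
  · simp [hs0]
  · exact (by_contra fun hne => hj (if_neg hne)).symm
  · simp [hs0]
  · exact σ.eq_symm_apply.mpr (by_contra fun hne => hi (if_neg hne))
  · split_ifs <;> simp [hs]

lemma IsSignedPerm.exists_eq_signedPermMatrix {P : Matrix (Fin p) (Fin p) ℝ}
    (h : IsSignedPerm P) : ∃ (σ : Perm (Fin p)) (s : Fin p → ℝ),
      (∀ i, s i = 1 ∨ s i = -1) ∧ P = signedPermMatrix σ s := by
  choose f hf hf_unique using h.1
  have hinj : Function.Injective f := fun i₁ i₂ hi =>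
    (h.2.1 (f i₁)).unique (hf i₁) (hi ▸ hf i₂)
  let σ := Equiv.ofBijective f (Finite.injective_iff_bijective.mp hinj)
  refine ⟨σ, fun j => P (σ.symm j) j, fun j => ?_, ?_⟩
  · have hne : P (σ.symm j) j ≠ 0 := by
      have hσ : f (σ.symm j) = j := σ.apply_symm_apply j
      have hne' : P (σ.symm j) (f (σ.symm j)) ≠ 0 := hf _
      rwa [hσ] at hne'
    rcases h.2.2 (σ.symm j) j with h0 | h1 | h2
    · exact absurd h0 hne
    · exact Or.inl h1
    · exact Or.inr h2
  · ext i j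
    rw [signedPermMatrix_apply]
    split_ifs with hij
    · rw [← hij, σ.symm_apply_apply]
    · by_contra h0
      exact hij (hf_unique i j h0).symm

end IsSignedPerm

section Stabilizer

variable {p : ℕ} {D A B : Matrix (Fin p) (Fin p) ℝ}

lemma IsSO.mul (hA : IsSO A) (hB : IsSO B) : IsSO (A * B) :=
  ⟨transpose_mul_self_mul_eq_one hA.1 hB.1, by rw [det_mul, hA.2, hB.2, one_mul]⟩

lemma IsSO.transpose (hA : IsSO A) : IsSO Aᵀ :=
  ⟨by rw [transpose_transpose]; exact mul_eq_one_comm.mp hA.1, by rw [det_transpose, hA.2]⟩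

lemma mul_mem_GD (hA : A ∈ GD D) (hB : B ∈ GD D) : A * B ∈ GD D :=
  ⟨hA.1.mul hB.1, by rw [Matrix.mul_assoc, hB.2, ← Matrix.mul_assoc, hA.2, Matrix.mul_assoc]⟩

lemma transpose_mem_GD (hA : A ∈ GD D) : Aᵀ ∈ GD D := by
  refine ⟨hA.1.transpose, ?_⟩
  have hAAt : A * Aᵀ = 1 := mul_eq_one_comm.mp hA.1.1
  calc Aᵀ * D = Aᵀ * (D * A) * Aᵀ := by rw [← Matrix.mul_assoc, Matrix.mul_assoc _ A, hAAt,
        Matrix.mul_one]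
    _ = D * Aᵀ := by rw [← hA.2, ← Matrix.mul_assoc, hA.1.1, Matrix.one_mul]

lemma GD0_eq_connectedComponentIn (D : Matrix (Fin p) (Fin p) ℝ) :
    GD0 D = connectedComponentIn (GD D) 1 := by
  ext R
  rw [connectedComponentIn_eq_image (one_mem_GD D)]
  exact ⟨fun ⟨h, hc⟩ => ⟨⟨R, h⟩, hc, rfl⟩, fun ⟨⟨_, h⟩, hc, hR⟩ => hR ▸ ⟨h, hc⟩⟩

lemma GD0_subset_GD : GD0 D ⊆ GD D := by
  rw [GD0_eq_connectedComponentIn]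
  exact connectedComponentIn_subset _ _

lemma mem_GD0_of_isPreconnected {S : Set (Matrix (Fin p) (Fin p) ℝ)} (hS : IsPreconnected S)
    (hSD : S ⊆ GD D) (h1 : 1 ∈ S) (hA : A ∈ S) : A ∈ GD0 D := by
  rw [GD0_eq_connectedComponentIn]
  exact hS.subset_connectedComponentIn h1 hSD hA

lemma one_mem_GD0 : 1 ∈ GD0 D :=
  mem_GD0_of_isPreconnected isPreconnected_singleton (by simpa using one_mem_GD D) rfl rfl

lemma isPreconnected_GD0 : IsPreconnected (GD0 D) := by
  rw [GD0_eq_connectedComponentIn]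
  exact isPreconnected_connectedComponentIn

lemma mul_mem_GD0 (hA : A ∈ GD0 D) (hB : B ∈ GD0 D) : A * B ∈ GD0 D := by
  refine mem_GD0_of_isPreconnected ((isPreconnected_GD0.prod isPreconnected_GD0).image
    (fun M => M.1 * M.2) continuous_mul.continuousOn) ?_ ⟨(1, 1), ⟨one_mem_GD0, one_mem_GD0⟩,
    Matrix.mul_one 1⟩ ⟨(A, B), ⟨hA, hB⟩, rfl⟩
  rintro _ ⟨M, hM, rfl⟩
  exact mul_mem_GD (GD0_subset_GD hM.1) (GD0_subset_GD hM.2)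

lemma transpose_mem_GD0 (hA : A ∈ GD0 D) : Aᵀ ∈ GD0 D := by
  refine mem_GD0_of_isPreconnected (isPreconnected_GD0.image _
    (continuous_id.matrix_transpose).continuousOn) ?_ ⟨1, one_mem_GD0, transpose_one⟩ ⟨A, hA, rfl⟩
  rintro _ ⟨M, hM, rfl⟩
  exact transpose_mem_GD (GD0_subset_GD hM)

end Stabilizer

section Reduction

variable {p : ℕ} {d : Fin p → ℝ} {c : ℝ}

lemma householder_mul_householder_mem_GD {w₁ w₂ : Fin p → ℝ} (hw₁ : w₁ ≠ 0) (hw₂ : w₂ ≠ 0)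
    (h₁ : ∀ i, w₁ i ≠ 0 → d i = c) (h₂ : ∀ i, w₂ i ≠ 0 → d i = c) :
    householder w₂ * householder w₁ ∈ GD (diagonal d) := by
  refine ⟨⟨?_, ?_⟩, ?_⟩
  · rw [transpose_mul, householder_transpose, householder_transpose, Matrix.mul_assoc,
      ← Matrix.mul_assoc (householder w₂), householder_mul_self hw₂, Matrix.one_mul,
      householder_mul_self hw₁]
  · rw [det_mul, det_householder hw₂, det_householder hw₁]
    norm_num
  · rw [Matrix.mul_assoc, householder_mul_diagonal_comm h₁, ← Matrix.mul_assoc,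
      householder_mul_diagonal_comm h₂, Matrix.mul_assoc]

/-- Moving the second mirror along the segment from `w₁` to `w₂`, which avoids `0`, joins the
product to `householder w₁ * householder w₁ = 1`. -/
lemma householder_mul_householder_mem_GD0 {w₁ w₂ : Fin p → ℝ}
    (h₁ : ∀ i, w₁ i ≠ 0 → d i = c) (h₂ : ∀ i, w₂ i ≠ 0 → d i = c)
    (hli : LinearIndependent ℝ ![w₁, w₂]) :
    householder w₂ * householder w₁ ∈ GD0 (diagonal d) := by
  let w : ℝ → Fin p → ℝ := fun t => (1 - t) • w₁ + t • w₂
  have hw t : w t ≠ 0 := fun h => by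
    have := LinearIndependent.pair_iff.mp hli _ _ h
    linarith [this.1, this.2]
  have hsupp t i (hi : w t i ≠ 0) : d i = c := by
    by_cases hw₁ : w₁ i = 0
    · exact h₂ i fun hw₂ => hi (by simp [w, hw₁, hw₂])
    · exact h₁ i hw₁
  have hw₁ : w₁ ≠ 0 := by simpa [w] using hw 0
  have hcont : Continuous fun t => householder (w t) * householder w₁ :=
    (continuous_householder (by fun_prop) hw).mul continuous_const
  refine mem_GD0_of_isPreconnected (isPreconnected_range hcont) ?_ ⟨0, ?_⟩ ⟨1, by simp [w]⟩
  · rintro _ ⟨t, rfl⟩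
    exact householder_mul_householder_mem_GD hw₁ (hw t) h₁ (hsupp t)
  · simpa [w] using householder_mul_self hw₁

lemma apply_eq_zero_of_col_eq_zero {R : Matrix (Fin p) (Fin p) ℝ} (hR : Rᵀ * R = 1) {m j : Fin p}
    (hm : ∀ i ≠ m, R i m = 0) (hj : j ≠ m) : R m j = 0 := by
  have hcol k : (Rᵀ * R) m k = R m m * R m k := by
    rw [mul_apply, Finset.sum_eq_single m (fun i _ hi => by rw [transpose_apply, hm i hi, zero_mul])
      (by simp), transpose_apply]
  have hmm := hcol m
  have hmj := hcol j
  rw [hR, one_apply_eq] at hmm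
  rw [hR, one_apply_ne hj.symm] at hmj
  exact (mul_eq_zero.mp hmj.symm).resolve_left (left_ne_zero_of_mul_eq_one hmm.symm)

/-- The product of the reflections in `v - e_j` and in `e_j` sends the `j`-th column `v` of `R`
to `-e_j` and fixes every `e_m` with `v m = 0`, `m ≠ j`. -/
lemma exists_mem_GD0_mul_col_eq_zero {R : Matrix (Fin p) (Fin p) ℝ} (hR : Rᵀ * R = 1)
    (hRd : R * diagonal d = diagonal d * R) (j : Fin p) :
    ∃ W ∈ GD0 (diagonal d), (∀ i ≠ j, (W * R) i j = 0) ∧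
      ∀ m ≠ j, (∀ i ≠ m, R i m = 0) → ∀ i ≠ m, (W * R) i m = 0 := by
  by_cases hclean : ∀ i ≠ j, R i j = 0
  · exact ⟨1, one_mem_GD0, by simpa using hclean, fun m _ hm => by simpa using hm⟩
  push Not at hclean
  obtain ⟨i₀, hi₀, hRi₀⟩ := hclean
  set v : Fin p → ℝ := fun i => R i j with hv_def
  set e : Fin p → ℝ := Pi.single j 1
  have he : e ≠ 0 := by simp [e]
  have hv : v ⬝ᵥ v = e ⬝ᵥ e := by
    rw [show v ⬝ᵥ v = (Rᵀ * R) j j from rfl, hR]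
    simp [e]
  have hve : v ≠ e := fun h => hRi₀ (by simpa [e, hi₀] using congrFun h i₀)
  have hli : LinearIndependent ℝ ![v - e, e] := by
    refine LinearIndependent.pair_iff.mpr fun s t hst => ?_
    have hs : s = 0 := by simpa [e, hi₀, v, hRi₀] using congrFun hst i₀
    subst hs
    exact ⟨rfl, by simpa [e] using congrFun hst j⟩
  have hsupp_e i (hi : e i ≠ 0) : d i = d j := by
    have : i = j := by_contra fun h => hi (by simp [e, h])
    rw [this]
  have hsupp i (hi : (v - e) i ≠ 0) : d i = d j := by
    by_cases hvi : v i = 0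
    · exact hsupp_e i (by simpa [hvi] using hi)
    · exact mul_diagonal_eq_diagonal_mul_iff.mp hRd i j hvi
  set W := householder e * householder (v - e)
  have hWv : W *ᵥ v = -e := by
    rw [← mulVec_mulVec, householder_sub_mulVec hv hve, householder_mulVec_self he]
  refine ⟨W, householder_mul_householder_mem_GD0 hsupp hsupp_e hli, fun i hi => ?_,
    fun m hm hRm i hi => ?_⟩
  · have : (W * R) i j = (W *ᵥ v) i := rfl
    simp [this, hWv, e, hi]
  · have hve_m : (v - e) ⬝ᵥ Pi.single m 1 = 0 := by
      simp [e, hv_def, hm, apply_eq_zero_of_col_eq_zero hR hRm hm.symm]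
    have he_m : e ⬝ᵥ Pi.single m 1 = 0 := by simp [e, hm]
    have hWm : W *ᵥ Pi.single m 1 = Pi.single m 1 := by
      rw [← mulVec_mulVec, householder_mulVec_of_dotProduct_eq_zero hve_m,
        householder_mulVec_of_dotProduct_eq_zero he_m]
    have hWim : W i m = 0 := by simpa [hi] using congrFun hWm i
    rw [mul_apply, Finset.sum_eq_single m (fun k _ hk => by rw [hRm k hk, mul_zero]) (by simp),
      hWim, zero_mul]

lemma exists_mem_GD0_mul_isDiag {R : Matrix (Fin p) (Fin p) ℝ} (hR : Rᵀ * R = 1)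
    (hRd : R * diagonal d = diagonal d * R) : ∃ W ∈ GD0 (diagonal d), (W * R).IsDiag := by
  suffices key : ∀ (T : Finset (Fin p)) (R : Matrix (Fin p) (Fin p) ℝ), Rᵀ * R = 1 →
      R * diagonal d = diagonal d * R → (∀ j ∉ T, ∀ i ≠ j, R i j = 0) →
      ∃ W ∈ GD0 (diagonal d), (W * R).IsDiag from key Finset.univ R hR hRd (by simp)
  intro T
  induction T using Finset.induction_on with
  | empty =>
    exact fun R _ _ hdiag => ⟨1, one_mem_GD0, fun i j hij => by
      simpa using hdiag j (Finset.notMem_empty j) i hij⟩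
  | insert j T _ ih =>
    intro R hR hRd hclean
    obtain ⟨W₀, hW₀, hcol_j, hcols⟩ := exists_mem_GD0_mul_col_eq_zero hR hRd j
    have hW₀D := GD0_subset_GD hW₀
    obtain ⟨W₁, hW₁, hdiag⟩ := ih (W₀ * R)
      (transpose_mul_self_mul_eq_one hW₀D.1.1 hR)
      (by rw [Matrix.mul_assoc, hRd, ← Matrix.mul_assoc, hW₀D.2, Matrix.mul_assoc])
      (fun m hm => by
        by_cases hmj : m = j
        · exact hmj ▸ hcol_j
        · exact hcols m hmj (hclean m (by simp [hmj, hm])))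
    exact ⟨W₁ * W₀, mul_mem_GD0 hW₁ hW₀, by rwa [Matrix.mul_assoc]⟩

theorem exists_mem_GD0_mul_diagonal {R : Matrix (Fin p) (Fin p) ℝ} (hR : Rᵀ * R = 1)
    (hRd : R * diagonal d = diagonal d * R) :
    ∃ W ∈ GD0 (diagonal d), ∃ s : Fin p → ℝ, (∀ i, s i = 1 ∨ s i = -1) ∧
      R = W * diagonal s := by
  obtain ⟨W, hW, hdiag⟩ := exists_mem_GD0_mul_isDiag hR hRd
  have hWD := GD0_subset_GD hW
  obtain ⟨s, hs, hWR⟩ := exists_diagonal_of_isDiag_of_transpose_mul_self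
    (transpose_mul_self_mul_eq_one hWD.1.1 hR) hdiag
  refine ⟨Wᵀ, transpose_mem_GD0 hW, s, hs, ?_⟩
  rw [← hWR, ← Matrix.mul_assoc, hWD.1.1, Matrix.one_mul]

end Reduction

section Fiber

variable {p : ℕ} {U : Matrix (Fin p) (Fin p) ℝ} {d : Fin p → ℝ}

lemma mem_fiber_of_mem_GD0 {R P : Matrix (Fin p) (Fin p) ℝ} (hU : IsSO U) (hd : ∀ i, 0 < d i)
    (hR : R ∈ GD0 (diagonal d)) (hP : IsEvenSignedPerm P) :
    (U * R * P⁻¹, P * diagonal d * P⁻¹) ∈ fiber (U * diagonal d * Uᵀ) := by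
  obtain ⟨σ, s, hs, rfl⟩ := hP.1.exists_eq_signedPermMatrix
  have hs2 i : s i * s i = 1 := mul_self_eq_one_iff.mpr (hs i)
  set P := signedPermMatrix σ s
  have hPP : Pᵀ * P = 1 := signedPermMatrix_transpose_mul_self σ hs2
  have hRD := GD0_subset_GD hR
  rw [inv_eq_left_inv hPP]
  refine ⟨(hU.mul hRD.1).mul (IsSO.transpose ⟨hPP, hP.2⟩), ?_, ?_⟩
  · rw [signedPermMatrix_mul_diagonal_mul_transpose σ hs2]
    exact ⟨isDiag_diagonal _, fun i => by simpa using hd (σ i)⟩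
  · calc _ = U * R * (Pᵀ * P) * diagonal d * (Pᵀ * P) * Rᵀ * Uᵀ := by
          simp only [transpose_mul, transpose_transpose, Matrix.mul_assoc]
      _ = U * (R * diagonal d * Rᵀ) * Uᵀ := by
          simp only [hPP, Matrix.mul_one, Matrix.mul_assoc]
      _ = _ := by rw [hRD.2, Matrix.mul_assoc (diagonal d), mul_eq_one_comm.mp hRD.1.1, Matrix.mul_one]

lemma exists_of_mem_fiber {V L : Matrix (Fin p) (Fin p) ℝ} (hU : IsSO U)
    (hVL : (V, L) ∈ fiber (U * diagonal d * Uᵀ)) :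
    ∃ R P : Matrix (Fin p) (Fin p) ℝ, R ∈ GD0 (diagonal d) ∧ IsEvenSignedPerm P ∧
      (V, L) = (U * R * P⁻¹, P * diagonal d * P⁻¹) := by
  obtain ⟨hV, ⟨hLdiag, -⟩, hVL⟩ := hVL
  obtain ⟨l, rfl⟩ : ∃ l, L = diagonal l := ⟨L.diag, hLdiag.diagonal_diag.symm⟩
  set Q := Uᵀ * V
  have hQ : IsSO Q := hU.transpose.mul hV
  have hQlQ : Q * diagonal l * Qᵀ = diagonal d := by
    calc _ = Uᵀ * (V * diagonal l * Vᵀ) * U := by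
          simp only [Q, transpose_mul, transpose_transpose, Matrix.mul_assoc]
      _ = (Uᵀ * U) * diagonal d * (Uᵀ * U) := by
          rw [show V * diagonal l * Vᵀ = _ from hVL]
          simp only [Matrix.mul_assoc]
      _ = _ := by rw [hU.1, Matrix.one_mul, Matrix.mul_one]
  obtain ⟨σ, rfl⟩ := exists_perm_comp_eq_of_mul_diagonal_mul_eq hQ.1 hQlQ
  set P₀ := σ.permMatrix ℝ
  have hP₀ : P₀ᵀ * P₀ = 1 := permMatrix_transpose_mul_self σ
  have hR₁ : (Q * P₀)ᵀ * (Q * P₀) = 1 := transpose_mul_self_mul_eq_one hQ.1 hP₀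
  have hR₁d : Q * P₀ * diagonal d = diagonal d * (Q * P₀) := by
    refine mul_eq_mul_of_mul_mul_transpose_eq hR₁ ?_
    calc _ = Q * (P₀ * diagonal d * P₀ᵀ) * Qᵀ := by simp only [transpose_mul, Matrix.mul_assoc]
      _ = _ := by rw [permMatrix_mul_diagonal_mul_transpose, hQlQ]
  obtain ⟨W, hW, s, hs, hQP₀⟩ := exists_mem_GD0_mul_diagonal hR₁ hR₁d
  have hs2 i : s i * s i = 1 := mul_self_eq_one_iff.mpr (hs i)
  set P := signedPermMatrix σ s
  have hPinv : P⁻¹ = Pᵀ := inv_eq_left_inv (signedPermMatrix_transpose_mul_self σ hs2)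
  have hVeq : V = U * W * Pᵀ := by
    calc V = (U * Uᵀ) * V * (P₀ * P₀ᵀ) := by
          rw [mul_eq_one_comm.mp hU.1, mul_eq_one_comm.mp hP₀, Matrix.one_mul, Matrix.mul_one]
      _ = U * (Q * P₀) * P₀ᵀ := by simp only [Q, Matrix.mul_assoc]
      _ = U * W * Pᵀ := by
          rw [hQP₀]
          simp only [P, P₀, signedPermMatrix, transpose_mul, diagonal_transpose, Matrix.mul_assoc]
  have hPdet : P.det = 1 := by
    have := congrArg det hVeq
    rwa [det_mul, det_mul, det_transpose, hV.2, hU.2, (GD0_subset_GD hW).1.2, one_mul, one_mul,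
      eq_comm] at this
  refine ⟨W, P, hW, ⟨isSignedPerm_signedPermMatrix σ hs, hPdet⟩, ?_⟩
  rw [hPinv, signedPermMatrix_mul_diagonal_mul_transpose σ hs2, ← hVeq]

end Fiber

theorem stmt2_general (p : ℕ) (X : Matrix (Fin p) (Fin p) ℝ)
    (U D : Matrix (Fin p) (Fin p) ℝ) (hUD : (U, D) ∈ fiber X) :
    fiber X = { VL | ∃ R P : Matrix (Fin p) (Fin p) ℝ,
      R ∈ GD0 D ∧ IsEvenSignedPerm P ∧
      VL = (U * R * P⁻¹, P * D * P⁻¹) } := by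
  obtain ⟨hU, ⟨hDdiag, hDpos⟩, rfl⟩ := hUD
  obtain ⟨d, rfl⟩ : ∃ d, D = diagonal d := ⟨D.diag, hDdiag.diagonal_diag.symm⟩
  ext ⟨V, L⟩
  constructor
  · exact exists_of_mem_fiber hU
  · rintro ⟨R, P, hR, hP, hVL⟩
    rw [hVL]
    exact mem_fiber_of_mem_GD0 hU (fun i => by simpa using hDpos i) hR hP

theorem stmt2 (p : ℕ) (hp : 1 ≤ p) (X : Matrix (Fin p) (Fin p) ℝ) (hX : X.PosDef)
    (U D : Matrix (Fin p) (Fin p) ℝ) (hUD : (U, D) ∈ fiber X) :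
    fiber X = { VL | ∃ R P : Matrix (Fin p) (Fin p) ℝ,
      R ∈ GD0 D ∧ IsEvenSignedPerm P ∧
      VL = (U * R * P⁻¹, P * D * P⁻¹) } :=
  stmt2_general p X U D hUD
end

section
/- Let p ≥ 2, fix a weight k > 0, and let U, V ∈ SO(p) be such that the pair (U,V) is not sign-change reducible, i.e., logdist(I_σ · U⁻¹ · V) ≥ logdist(U⁻¹ · V) for every even sign-change matrix I_σ. Then there exist diagonal matrices D and Λ, each with strictly positive and pairwise distinct diagonal entries, such that ((U,D),(V,Λ)) is a minimal pair: setting X = U·D·Uᵀ and Y = V·Λ·Vᵀ, one has d_M((U,D),(V,Λ)) ≤ d_M((U′,D′),(V′,Λ′)) for every (U′,D′) ∈ E_X and every (V′,Λ′) ∈ E_Y. -/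
open Matrix

/-!
Take `D = Λ` with eigenvalues `exp (c * i)` for a large `c`. Any `(U', D')` in the fiber over
`U D Uᵀ` satisfies `W D' = D W` for the orthogonal `W = Uᵀ U'`, so the diagonal of `D'` is a
relabelling of that of `D`. If the fiber points over `X` and `Y` relabel differently, the
log-eigenvalue term alone is at least `c²`, which exceeds `d_M((U,D),(V,D))²`. If they relabel
in the same way, `W' Wᵀ` commutes with `D`, whose entries are distinct, so it is an even sign
change `I_σ`, and `U'⁻¹ V'` is conjugate to `I_σ U⁻¹ V`; non-reducibility concludes.
-/

open Function

section Orthogonal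

variable {n α : Type*} [Fintype n] [DecidableEq n] [CommRing α]

lemma Matrix.mul_eq_mul_of_conj_eq {U U' D D' : Matrix n n α} (hU : Uᵀ * U = 1)
    (hU' : U'ᵀ * U' = 1) (h : U' * D' * U'ᵀ = U * D * Uᵀ) :
    Uᵀ * U' * D' = D * (Uᵀ * U') :=
  calc Uᵀ * U' * D' = Uᵀ * (U' * D' * U'ᵀ) * U' := by
        simp only [Matrix.mul_assoc, hU', Matrix.mul_one]
    _ = D * (Uᵀ * U') := by
        rw [h]; simp only [← Matrix.mul_assoc, hU, Matrix.one_mul]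

lemma Matrix.transpose_mul_self_transpose_mul {U U' : Matrix n n α} (hU : U * Uᵀ = 1)
    (hU' : U'ᵀ * U' = 1) : (Uᵀ * U')ᵀ * (Uᵀ * U') = 1 := by
  rw [transpose_mul, transpose_transpose, Matrix.mul_assoc, ← Matrix.mul_assoc U, hU,
    Matrix.one_mul, hU']

lemma Matrix.transpose_mul_eq_of_mul_eq {W D D' : Matrix n n α} (hW : Wᵀ * W = 1)
    (h : W * D' = D * W) : Wᵀ * D = D' * Wᵀ := by
  have hW' : W * Wᵀ = 1 := mul_eq_one_comm.mp hW
  calc Wᵀ * D = Wᵀ * (D * W) * Wᵀ := by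
        rw [Matrix.mul_assoc, Matrix.mul_assoc, hW', Matrix.mul_one]
    _ = D' * Wᵀ := by rw [← h, ← Matrix.mul_assoc, hW, Matrix.one_mul]

variable [NoZeroDivisors α]

lemma Matrix.exists_eq_of_mul_diagonal_eq [Nontrivial α] {W : Matrix n n α} {d d' : n → α}
    (hW : Wᵀ * W = 1) (h : W * diagonal d' = diagonal d * W) (j : n) : ∃ i, d' j = d i := by
  obtain ⟨i, hi⟩ : ∃ i, W i j ≠ 0 := by
    by_contra! hcol
    simpa [Matrix.mul_apply, hcol] using congrFun (congrFun hW j) j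
  refine ⟨i, mul_left_cancel₀ hi ?_⟩
  simpa [mul_comm] using congrFun (congrFun h i) j

lemma Matrix.eq_diagonal_of_mul_diagonal_eq {R : Matrix n n α} {d : n → α}
    (hd : Injective d) (h : R * diagonal d = diagonal d * R) : R = diagonal R.diag := by
  ext i j
  by_cases hij : i = j
  · simp [hij]
  · have hRij : (d j - d i) * R i j = 0 := by
      have := congrFun (congrFun h i) j
      simp only [mul_diagonal, diagonal_mul] at this
      linear_combination this
    simpa [hij, sub_ne_zero.mpr (hd.ne (Ne.symm hij))] using hRij

lemma Matrix.sign_of_diagonal_transpose_mul_self {σ : n → α}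
    (h : (diagonal σ)ᵀ * diagonal σ = 1) (i : n) : σ i = 1 ∨ σ i = -1 := by
  rw [diagonal_transpose, diagonal_mul_diagonal, ← diagonal_one] at h
  exact mul_self_eq_one_iff.mp (congrFun (diagonal_injective h) i)

end Orthogonal

variable {p : ℕ}

lemma IsSO.mul_transpose_self {U : Matrix (Fin p) (Fin p) ℝ} (hU : IsSO U) : U * Uᵀ = 1 :=
  mul_eq_one_comm.mp hU.1

lemma IsSO.inv_eq_transpose {U : Matrix (Fin p) (Fin p) ℝ} (hU : IsSO U) : U⁻¹ = Uᵀ :=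
  inv_eq_left_inv hU.1

lemma IsSO.det_transpose_mul {U U' : Matrix (Fin p) (Fin p) ℝ} (hU : IsSO U) (hU' : IsSO U') :
    (Uᵀ * U').det = 1 := by
  rw [det_mul, det_transpose, hU.2, hU'.2, one_mul]

lemma frob_zero : frob (0 : Matrix (Fin p) (Fin p) ℝ) = 0 := by
  simp [frob]

lemma sq_apply_le_frob_sq (A : Matrix (Fin p) (Fin p) ℝ) (i j : Fin p) :
    A i j ^ 2 ≤ frob A ^ 2 := by
  rw [frob, Real.sq_sqrt (by positivity)]
  calc A i j ^ 2 ≤ ∑ l, A i l ^ 2 :=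
        Finset.single_le_sum (fun l _ => sq_nonneg (A i l)) (Finset.mem_univ j)
    _ ≤ ∑ i, ∑ l, A i l ^ 2 :=
        Finset.single_le_sum (f := fun i => ∑ l, A i l ^ 2)
          (fun i _ => by positivity) (Finset.mem_univ i)

lemma frob_eq_sqrt_trace (A : Matrix (Fin p) (Fin p) ℝ) : frob A = √(Aᵀ * A).trace := by
  simp only [frob, trace, diag, mul_apply, transpose_apply, sq]
  rw [Finset.sum_comm]

lemma frob_transpose_mul_mul {Q : Matrix (Fin p) (Fin p) ℝ} (hQ : Qᵀ * Q = 1)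
    (A : Matrix (Fin p) (Fin p) ℝ) : frob (Qᵀ * A * Q) = frob A := by
  have hQ' : Q * Qᵀ = 1 := mul_eq_one_comm.mp hQ
  rw [frob_eq_sqrt_trace, frob_eq_sqrt_trace A]
  congr 1
  calc ((Qᵀ * A * Q)ᵀ * (Qᵀ * A * Q)).trace = (Qᵀ * (Aᵀ * A * Q)).trace := by
        simp only [transpose_mul, transpose_transpose, Matrix.mul_assoc]
        rw [← Matrix.mul_assoc Q Qᵀ, hQ', Matrix.one_mul]
    _ = (Aᵀ * A).trace := by
        rw [trace_mul_comm, Matrix.mul_assoc, hQ', Matrix.mul_one]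

lemma logdist_nonneg (Q : Matrix (Fin p) (Fin p) ℝ) : 0 ≤ logdist Q :=
  Real.sInf_nonneg (by rintro r ⟨A, -, -, rfl⟩; exact Real.sqrt_nonneg _)

lemma logdist_transpose_mul_mul {Q : Matrix (Fin p) (Fin p) ℝ} (hQ : Qᵀ * Q = 1)
    (M : Matrix (Fin p) (Fin p) ℝ) : logdist (Qᵀ * M * Q) = logdist M := by
  have hsub : ∀ Q M : Matrix (Fin p) (Fin p) ℝ, Qᵀ * Q = 1 →
      { r | ∃ A : Matrix (Fin p) (Fin p) ℝ, Aᵀ = -A ∧ NormedSpace.exp A = M ∧ r = frob A } ⊆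
      { r | ∃ A : Matrix (Fin p) (Fin p) ℝ,
          Aᵀ = -A ∧ NormedSpace.exp A = Qᵀ * M * Q ∧ r = frob A } := by
    rintro Q M hQ r ⟨A, hskew, hexp, rfl⟩
    have hinv : Q⁻¹ = Qᵀ := inv_eq_left_inv hQ
    have hunit : IsUnit Q := IsUnit.of_mul_eq_one_right Qᵀ hQ
    refine ⟨Qᵀ * A * Q, ?_, ?_, (frob_transpose_mul_mul hQ A).symm⟩
    · simp only [transpose_mul, transpose_transpose, hskew, Matrix.mul_neg, Matrix.neg_mul,
        Matrix.mul_assoc]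
    · rw [← hinv, Matrix.exp_conj' Q A hunit, hexp]
  have hQ' : Q * Qᵀ = 1 := mul_eq_one_comm.mp hQ
  have hM : Qᵀᵀ * (Qᵀ * M * Q) * Qᵀ = M := by
    simp only [transpose_transpose, ← Matrix.mul_assoc, hQ', Matrix.one_mul]
    rw [Matrix.mul_assoc, hQ', Matrix.mul_one]
  refine congrArg sInf (subset_antisymm ?_ (hsub Q M hQ))
  simpa only [hM] using hsub Qᵀ (Qᵀ * M * Q) (by rwa [transpose_transpose])

lemma exists_diag_eq_of_mem_fiber {U U' : Matrix (Fin p) (Fin p) ℝ} {d δ : Fin p → ℝ}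
    (hU : IsSO U) (h : (U', diagonal δ) ∈ fiber (U * diagonal d * Uᵀ)) (j : Fin p) :
    ∃ i, δ j = d i :=
  exists_eq_of_mul_diagonal_eq (transpose_mul_self_transpose_mul hU.mul_transpose_self h.1.1)
    (mul_eq_mul_of_conj_eq hU.1 h.1.1 h.2.2) j

lemma exists_sign_logdist_eq_of_mem_fiber {U V U' V' D' : Matrix (Fin p) (Fin p) ℝ}
    {d : Fin p → ℝ} (hd : Injective d) (hU : IsSO U) (hV : IsSO V)
    (hUD' : (U', D') ∈ fiber (U * diagonal d * Uᵀ))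
    (hVD' : (V', D') ∈ fiber (V * diagonal d * Vᵀ)) :
    ∃ σ : Fin p → ℝ, (∀ i, σ i = 1 ∨ σ i = -1) ∧ (diagonal σ).det = 1 ∧
      logdist (U'⁻¹ * V') = logdist (diagonal σ * (U⁻¹ * V)) := by
  set W := Uᵀ * U'
  set W' := Vᵀ * V'
  have hW : Wᵀ * W = 1 := transpose_mul_self_transpose_mul hU.mul_transpose_self hUD'.1.1
  have hW' : W'ᵀ * W' = 1 := transpose_mul_self_transpose_mul hV.mul_transpose_self hVD'.1.1
  have hWD : Wᵀ * diagonal d = D' * Wᵀ :=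
    transpose_mul_eq_of_mul_eq hW (mul_eq_mul_of_conj_eq hU.1 hUD'.1.1 hUD'.2.2)
  have hW'D : W' * D' = diagonal d * W' := mul_eq_mul_of_conj_eq hV.1 hVD'.1.1 hVD'.2.2
  set R := W' * Wᵀ
  have hRd : R * diagonal d = diagonal d * R := by
    rw [Matrix.mul_assoc, hWD, ← Matrix.mul_assoc, hW'D, Matrix.mul_assoc]
  have hR : R = diagonal R.diag := eq_diagonal_of_mul_diagonal_eq hd hRd
  have hRR : Rᵀ * R = 1 := by
    simp only [R, transpose_mul, transpose_transpose, Matrix.mul_assoc]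
    rw [← Matrix.mul_assoc W'ᵀ, hW', Matrix.one_mul, mul_eq_one_comm.mp hW]
  refine ⟨R.diag, sign_of_diagonal_transpose_mul_self (hR ▸ hRR), ?_, ?_⟩
  · rw [← hR, det_mul, det_transpose, hU.det_transpose_mul hUD'.1,
      hV.det_transpose_mul hVD'.1, one_mul]
  · rw [← hR, hUD'.1.inv_eq_transpose, hU.inv_eq_transpose,
      ← logdist_transpose_mul_mul hW' (R * (Uᵀ * V))]
    congr 1
    simp only [R, ← Matrix.mul_assoc, hW', Matrix.one_mul]
    simp only [W, W', transpose_mul, transpose_transpose, Matrix.mul_assoc]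
    rw [← Matrix.mul_assoc U, hU.mul_transpose_self, Matrix.one_mul, ← Matrix.mul_assoc V,
      hV.mul_transpose_self, Matrix.one_mul]

lemma dM_same_diag (k : ℝ) (U V D : Matrix (Fin p) (Fin p) ℝ) :
    dM k (U, D) (V, D) = √(k / 2 * logdist (U⁻¹ * V) ^ 2) := by
  simp [dM, frob_zero]

lemma one_le_sub_sq_of_ne {i i' : Fin p} (h : i ≠ i') : 1 ≤ ((i : ℝ) - i') ^ 2 := by
  have hne : ((i : ℕ) : ℤ) - (i' : ℕ) ≠ 0 := sub_ne_zero.mpr (by simpa [Fin.val_inj] using h)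
  rw [one_le_sq_iff_one_le_abs]
  exact_mod_cast Int.one_le_abs hne

lemma sq_le_frob_logDiag_sub_sq_of_mem_fiber {U V U' V' D' Λ' : Matrix (Fin p) (Fin p) ℝ}
    {c : ℝ} (hU : IsSO U) (hV : IsSO V)
    (hUD' : (U', D') ∈ fiber (U * diagonal (fun i : Fin p => Real.exp (c * i)) * Uᵀ))
    (hVΛ' : (V', Λ') ∈ fiber (V * diagonal (fun i : Fin p => Real.exp (c * i)) * Vᵀ))
    (hDΛ : D' ≠ Λ') : c ^ 2 ≤ frob (logDiag D' - logDiag Λ') ^ 2 := by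
  obtain ⟨δ, rfl⟩ : ∃ δ, D' = diagonal δ := ⟨_, hUD'.2.1.1.diagonal_diag.symm⟩
  obtain ⟨δ', rfl⟩ : ∃ δ', Λ' = diagonal δ' := ⟨_, hVΛ'.2.1.1.diagonal_diag.symm⟩
  obtain ⟨j, hj⟩ := Function.ne_iff.mp (mt (congrArg diagonal) hDΛ)
  obtain ⟨i, hi⟩ := exists_diag_eq_of_mem_fiber hU hUD' j
  obtain ⟨i', hi'⟩ := exists_diag_eq_of_mem_fiber hV hVΛ' j
  have hii' : i ≠ i' := fun h => hj (by rw [hi, hi', h])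
  calc c ^ 2 ≤ c ^ 2 * ((i : ℝ) - i') ^ 2 :=
        le_mul_of_one_le_right (sq_nonneg c) (one_le_sub_sq_of_ne hii')
    _ = (logDiag (diagonal δ) - logDiag (diagonal δ')) j j ^ 2 := by
        simp [logDiag, hi, hi']; ring
    _ ≤ _ := sq_apply_le_frob_sq _ j j

theorem stmt19_general (p : ℕ) (k : ℝ) (hk : 0 < k)
    (U V : Matrix (Fin p) (Fin p) ℝ) (hU : IsSO U) (hV : IsSO V)
    (hnsr : ∀ σ : Fin p → ℝ, (∀ i, σ i = 1 ∨ σ i = -1) →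
      (Matrix.diagonal σ).det = 1 →
      logdist (U⁻¹ * V) ≤ logdist (Matrix.diagonal σ * (U⁻¹ * V))) :
    ∃ D Λ : Matrix (Fin p) (Fin p) ℝ, IsPosDiag D ∧ IsPosDiag Λ ∧
      Function.Injective (fun i => D i i) ∧ Function.Injective (fun i => Λ i i) ∧
      ∀ UD' ∈ fiber (U * D * Uᵀ), ∀ VL' ∈ fiber (V * Λ * Vᵀ),
        dM k (U, D) (V, Λ) ≤ dM k UD' VL' := by
  set c := k / 2 * logdist (U⁻¹ * V) ^ 2 + 1 with hc
  have hc1 : 1 ≤ c := le_add_of_nonneg_left (by positivity)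
  set d : Fin p → ℝ := fun i => Real.exp (c * i)
  have hd : Injective d := fun i i' h => by
    simpa [d, (by positivity : c ≠ 0), Fin.val_inj] using h
  have hD : IsPosDiag (diagonal d) := ⟨isDiag_diagonal d, fun i => by simp [d, Real.exp_pos]⟩
  refine ⟨diagonal d, diagonal d, hD, hD, by simpa using hd, by simpa using hd, ?_⟩
  rintro ⟨U', D'⟩ hUD' ⟨V', Λ'⟩ hVΛ'
  by_cases hDΛ : D' = Λ'
  · subst hDΛ
    obtain ⟨σ, hσ, hdet, hlog⟩ := exists_sign_logdist_eq_of_mem_fiber hd hU hV hUD' hVΛ'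
    rw [dM_same_diag, dM_same_diag, hlog]
    gcongr
    · exact logdist_nonneg _
    · exact hnsr σ hσ hdet
  · have hgap := sq_le_frob_logDiag_sub_sq_of_mem_fiber hU hV hUD' hVΛ' hDΛ
    rw [dM_same_diag, dM]
    refine Real.sqrt_le_sqrt ?_
    dsimp only
    have hrot : 0 ≤ k / 2 * logdist (U'⁻¹ * V') ^ 2 := by positivity
    linarith [le_self_pow₀ hc1 two_ne_zero]

theorem stmt19 (p : ℕ) (hp : 2 ≤ p) (k : ℝ) (hk : 0 < k)
    (U V : Matrix (Fin p) (Fin p) ℝ) (hU : IsSO U) (hV : IsSO V)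
    (hnsr : ∀ σ : Fin p → ℝ, (∀ i, σ i = 1 ∨ σ i = -1) →
      (Matrix.diagonal σ).det = 1 →
      logdist (U⁻¹ * V) ≤ logdist (Matrix.diagonal σ * (U⁻¹ * V))) :
    ∃ D Λ : Matrix (Fin p) (Fin p) ℝ, IsPosDiag D ∧ IsPosDiag Λ ∧
      Function.Injective (fun i => D i i) ∧ Function.Injective (fun i => Λ i i) ∧
      ∀ UD' ∈ fiber (U * D * Uᵀ), ∀ VL' ∈ fiber (V * Λ * Vᵀ),
        dM k (U, D) (V, Λ) ≤ dM k UD' VL' :=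
  stmt19_general p k hk U V hU hV hnsr
end
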